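/- arXiv:1609.08590 — 4 statements merged into one kernel-verified Lean document; each statement's English description precedes it below -/
import Mathlib

section
/- Let N be a positive integer and let J_N = {(i,j) : 1 ≤ i ≤ j ≤ N}. The smallest cardinality of an admissible partition of J_N is exactly N; that is, there exists an admissible partition of J_N with N blocks, and every admissible partition of J_N has at least N blocks. -/
/-- `J N` is the set of pairs `(i, j)` with `1 ≤ i ≤ j ≤ N`. -/
def J (N : ℕ) : Finset (ℕ × ℕ) :=
  (Finset.Icc 1 N ×ˢ Finset.Icc 1 N).filter fun p => p.1 ≤ p.2

/-- A partition of `J N` is admissible if its blocks are nonempty subsets of `J N`,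
every element of `J N` lies in exactly one block, and within each block any two
distinct pairs share no coordinate. -/
def IsAdmissiblePartition (N : ℕ) (P : Finset (Finset (ℕ × ℕ))) : Prop :=
  (∀ B ∈ P, B.Nonempty) ∧
  (∀ B ∈ P, B ⊆ J N) ∧
  (∀ p ∈ J N, ∃! B, B ∈ P ∧ p ∈ B) ∧
  (∀ B ∈ P, ∀ p ∈ B, ∀ q ∈ B, p ≠ q →
    p.1 ≠ q.1 ∧ p.1 ≠ q.2 ∧ p.2 ≠ q.1 ∧ p.2 ≠ q.2)

/-!
Within a block the pairs `(1, j)`, `1 ≤ j ≤ N`, pairwise share the coordinate `1`, so they lie in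
`N` distinct blocks. Conversely, the fibres of `(i, j) ↦ (i + j) mod N` form an admissible
partition with at most `N` blocks: if two pairs of a fibre share a coordinate, their other
coordinates are congruent mod `N`, hence equal since both lie in `[1, N]`.
-/

open Finset

section FiberPartition

variable {α β : Type*} [DecidableEq α] [DecidableEq β]

def fiberPartition (s : Finset α) (f : α → β) : Finset (Finset α) :=
  s.image fun a => {x ∈ s | f x = f a}

variable {s : Finset α} {f : α → β}

theorem nonempty_of_mem_fiberPartition {B : Finset α} (hB : B ∈ fiberPartition s f) :
    B.Nonempty := by
  obtain ⟨a, ha, rfl⟩ := mem_image.mp hB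
  exact ⟨a, mem_filter.mpr ⟨ha, rfl⟩⟩

theorem subset_of_mem_fiberPartition {B : Finset α} (hB : B ∈ fiberPartition s f) : B ⊆ s := by
  obtain ⟨a, -, rfl⟩ := mem_image.mp hB
  exact filter_subset _ _

theorem existsUnique_mem_fiberPartition {a : α} (ha : a ∈ s) :
    ∃! B, B ∈ fiberPartition s f ∧ a ∈ B := by
  refine ⟨{x ∈ s | f x = f a}, ⟨mem_image_of_mem _ ha, mem_filter.mpr ⟨ha, rfl⟩⟩, ?_⟩
  rintro _ ⟨hB, haB⟩
  obtain ⟨b, -, rfl⟩ := mem_image.mp hB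
  rw [(mem_filter.mp haB).2]

theorem card_fiberPartition_le : #(fiberPartition s f) ≤ #(s.image f) := by
  simpa only [fiberPartition, image_image, Function.comp_def] using
    card_image_le (s := s.image f) (f := fun b => {x ∈ s | f x = b})

end FiberPartition

theorem mem_J_iff {N : ℕ} {p : ℕ × ℕ} :
    p ∈ J N ↔ (p.1 ∈ Icc 1 N ∧ p.2 ∈ Icc 1 N) ∧ p.1 ≤ p.2 := by
  simp only [J, mem_filter, mem_product]

theorem eq_of_modEq_of_mem_Icc {N x y : ℕ} (hx : x ∈ Icc 1 N) (hy : y ∈ Icc 1 N)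
    (h : x ≡ y [MOD N]) : x = y := by
  rw [mem_Icc] at hx hy
  rcases le_total x y with hxy | hyx
  · have := Nat.eq_zero_of_dvd_of_lt ((Nat.modEq_iff_dvd' hxy).mp h) (by omega)
    omega
  · have := Nat.eq_zero_of_dvd_of_lt ((Nat.modEq_iff_dvd' hyx).mp h.symm) (by omega)
    omega

theorem eq_of_add_modEq_add_left {N a b c : ℕ} (hb : b ∈ Icc 1 N) (hc : c ∈ Icc 1 N)
    (h : a + b ≡ a + c [MOD N]) : b = c :=
  eq_of_modEq_of_mem_Icc hb hc (Nat.ModEq.add_left_cancel' a h)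

theorem coords_disjoint_of_add_modEq {N : ℕ} {p q : ℕ × ℕ} (hp : p ∈ J N) (hq : q ∈ J N)
    (hpq : p ≠ q) (h : p.1 + p.2 ≡ q.1 + q.2 [MOD N]) :
    p.1 ≠ q.1 ∧ p.1 ≠ q.2 ∧ p.2 ≠ q.1 ∧ p.2 ≠ q.2 := by
  obtain ⟨⟨hp₁, hp₂⟩, hp₁₂⟩ := mem_J_iff.mp hp
  obtain ⟨⟨hq₁, hq₂⟩, hq₁₂⟩ := mem_J_iff.mp hq
  refine ⟨fun e => ?_, fun e => ?_, fun e => ?_, fun e => ?_⟩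
  · rw [e] at h
    exact hpq (Prod.ext e (eq_of_add_modEq_add_left hp₂ hq₂ h))
  · rw [e, add_comm q.1] at h
    have := eq_of_add_modEq_add_left hp₂ hq₁ h
    exact hpq (Prod.ext (by omega) (by omega))
  · rw [e, add_comm p.1] at h
    have := eq_of_add_modEq_add_left hp₁ hq₂ h
    exact hpq (Prod.ext (by omega) (by omega))
  · rw [e, add_comm p.1, add_comm q.1] at h
    exact hpq (Prod.ext (eq_of_add_modEq_add_left hp₁ hq₁ h) e)

theorem isAdmissiblePartition_fiberPartition_add_mod (N : ℕ) :
    IsAdmissiblePartition N (fiberPartition (J N) fun p => (p.1 + p.2) % N) := by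
  refine ⟨fun B => nonempty_of_mem_fiberPartition, fun B => subset_of_mem_fiberPartition,
    fun p => existsUnique_mem_fiberPartition, fun B hB p hp q hq hpq => ?_⟩
  obtain ⟨a, -, rfl⟩ := mem_image.mp hB
  exact coords_disjoint_of_add_modEq (mem_filter.mp hp).1 (mem_filter.mp hq).1 hpq
    ((mem_filter.mp hp).2.trans (mem_filter.mp hq).2.symm)

theorem card_fiberPartition_add_mod_le (N : ℕ) :
    #(fiberPartition (J N) fun p => (p.1 + p.2) % N) ≤ N := by
  refine card_fiberPartition_le.trans <| (card_le_card ?_).trans (card_range N).le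
  refine image_subset_iff.mpr fun p hp => mem_range.mpr (Nat.mod_lt _ ?_)
  have := mem_Icc.mp (mem_J_iff.mp hp).1.2
  omega

theorem le_card_of_isAdmissiblePartition {N : ℕ} {P : Finset (Finset (ℕ × ℕ))}
    (hP : IsAdmissiblePartition N P) : N ≤ #P := by
  obtain ⟨-, -, hcover, hdisjoint⟩ := hP
  calc N = #(Icc 1 N) := by simp
    _ ≤ #P := by
      refine card_le_card_of_forall_subsingleton (fun j B => (1, j) ∈ B)
        (fun j hj => (hcover (1, j) ?_).exists) fun B hB j hj l hl => ?_
      · obtain ⟨h1j, hjN⟩ := mem_Icc.mp hj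
        exact mem_J_iff.mpr ⟨⟨left_mem_Icc.mpr (h1j.trans hjN), hj⟩, h1j⟩
      · by_contra hjl
        exact (hdisjoint B hB _ hj.2 _ hl.2 (by simpa using hjl)).1 rfl

theorem smallest_admissible_partition_card_general (N : ℕ) :
    (∃ P : Finset (Finset (ℕ × ℕ)), IsAdmissiblePartition N P ∧ P.card = N) ∧
    (∀ P : Finset (Finset (ℕ × ℕ)), IsAdmissiblePartition N P → N ≤ P.card) := by
  have hP := isAdmissiblePartition_fiberPartition_add_mod N
  refine ⟨⟨_, hP, ?_⟩, fun P => le_card_of_isAdmissiblePartition⟩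
  exact (card_fiberPartition_add_mod_le N).antisymm (le_card_of_isAdmissiblePartition hP)

/-- The smallest cardinality of an admissible partition of `J N` is exactly `N`. -/
theorem smallest_admissible_partition_card (N : ℕ) (hN : 0 < N) :
    (∃ P : Finset (Finset (ℕ × ℕ)), IsAdmissiblePartition N P ∧ P.card = N) ∧
    (∀ P : Finset (Finset (ℕ × ℕ)), IsAdmissiblePartition N P → N ≤ P.card) :=
  smallest_admissible_partition_card_general N
end

section
/- Let N be a positive integer and let Q_1 ∪ … ∪ Q_N be an admissible partition of J_N = {(i,j) : 1 ≤ i ≤ j ≤ N} into N blocks. Define S : {1,…,N} × {1,…,N} → {1,…,N} by setting S(i,j) = S(j,i) = k whenever (i,j) with i ≤ j belongs to Q_k. Then S is a commutative latin square of size N. -/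
/-- The upper triangle `{(i, j) : i ≤ j}` of `Fin N × Fin N`. -/
def JF (N : ℕ) : Finset (Fin N × Fin N) :=
  Finset.univ.filter fun p => p.1 ≤ p.2

/-- A commutative latin square of size `N`: each row and each column is a bijection,
and the square is symmetric. -/
def IsCommLatinSquare (N : ℕ) (S : Fin N × Fin N → Fin N) : Prop :=
  (∀ i, Function.Bijective fun j => S (i, j)) ∧
  (∀ j, Function.Bijective fun i => S (i, j)) ∧
  (∀ i j, S (i, j) = S (j, i))

/-- Given an admissible partition `Q 1 ∪ ⋯ ∪ Q N` of the upper triangle `JF N` into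
`N` blocks (blocks nonempty, contained in `JF N`, pairwise disjoint, and covering
`JF N`, with no two distinct pairs in a block sharing a coordinate), the function `S`
defined by `S (i, j) = S (j, i) = k` whenever `(i, j) ∈ Q k` (for `i ≤ j`) is a
commutative latin square of size `N`. -/
theorem admissible_partition_gives_commLatinSquare (N : ℕ) (hN : 0 < N)
    (Q : Fin N → Finset (Fin N × Fin N))
    (hne : ∀ k, (Q k).Nonempty)
    (hsub : ∀ k, Q k ⊆ JF N)
    (hdisj : ∀ k l, k ≠ l → Disjoint (Q k) (Q l))
    (hcover : ∀ p ∈ JF N, ∃ k, p ∈ Q k)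
    (hadm : ∀ k, ∀ p ∈ Q k, ∀ q ∈ Q k, p ≠ q →
      p.1 ≠ q.1 ∧ p.1 ≠ q.2 ∧ p.2 ≠ q.1 ∧ p.2 ≠ q.2)
    (S : Fin N × Fin N → Fin N)
    (hSdef : ∀ k, ∀ p ∈ Q k, S p = k)
    (hSsymm : ∀ i j, S (i, j) = S (j, i)) :
    IsCommLatinSquare N S := by
  have key : ∀ i j : Fin N, i ≤ j → (i, j) ∈ Q (S (i, j)) := by
    intro i j h
    obtain ⟨k, hk⟩ := hcover (i, j) (by simp [JF, h])
    rw [hSdef k _ hk]; exact hk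
  have inj : ∀ i : Fin N, Function.Injective fun j => S (i, j) := by
    intro i j j' h
    simp only at h
    rcases le_total i j with hij | hij <;> rcases le_total i j' with hij' | hij'
    · have h1 := key i j hij
      have h2 := key i j' hij'
      rw [h] at h1
      by_contra hne'
      exact (hadm _ _ h1 _ h2 (by simp [hne'])).1 rfl
    · have h1 := key i j hij
      have h2 := key j' i hij'
      rw [h, hSsymm] at h1
      by_cases heq : ((i, j) : Fin N × Fin N) = (j', i)
      · have := heq
        simp only [Prod.mk.injEq] at this
        omega
      · exact absurd rfl (hadm _ _ h1 _ h2 heq).2.1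
    · have h1 := key j i hij
      have h2 := key i j' hij'
      rw [hSsymm, h] at h1
      by_cases heq : ((j, i) : Fin N × Fin N) = (i, j')
      · have := heq
        simp only [Prod.mk.injEq] at this
        omega
      · exact absurd rfl (hadm _ _ h1 _ h2 heq).2.2.1
    · have h1 := key j i hij
      have h2 := key j' i hij'
      rw [hSsymm, h, ← hSsymm] at h1
      by_cases heq : ((j, i) : Fin N × Fin N) = (j', i)
      · have := heq
        simp only [Prod.mk.injEq] at this
        omega
      · exact absurd rfl (hadm _ _ h1 _ h2 heq).2.2.2
  refine ⟨fun i => Finite.injective_iff_bijective.mp (inj i), fun j => ?_, hSsymm⟩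
  have : (fun i => S (i, j)) = fun i => S (j, i) := funext fun i => hSsymm i j
  rw [this]
  exact Finite.injective_iff_bijective.mp (inj j)
end

section
/- Let N be a positive integer, let (Ω, F, P) be a probability space, and let {Γ_{m,n} : 1 ≤ m ≤ n ≤ N} be a collection of non-negative measurable random variables with the following property: for each subset S of J_N = {(i,j) : 1 ≤ i ≤ j ≤ N} in which any two distinct pairs have no coordinate in common, the family {Γ_{m,n} : (m,n) ∈ S} is mutually independent. Then E(∏_{m ≤ n} Γ_{m,n}) ≤ ∏_{m ≤ n} E(Γ_{m,n}^N)^{1/N}, where expectations are taken in [0, ∞]. -/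
/-!
Split `J N` into the `N` diagonals `{(i, j) : i + j ≡ k [MOD N]}`. Two distinct pairs on one
diagonal share no coordinate: a common coordinate makes the other two coordinates congruent
modulo `N`, hence equal since both lie in `[1, N]`. So the variables on each diagonal are
independent and `E ∏_{diagonal} Γ^N = ∏_{diagonal} E Γ^N`. Hölder's inequality with the `N`
exponents `1/N`, applied to the products over the diagonals, gives the bound.
-/

open MeasureTheory ProbabilityTheory
open scoped ENNReal

/-- A set of pairs has no shared coordinates if any two distinct pairs in it
have no coordinate in common. -/
def NoSharedCoord (S : Finset (ℕ × ℕ)) : Prop :=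
  ∀ p ∈ S, ∀ q ∈ S, p ≠ q →
    p.1 ≠ q.1 ∧ p.1 ≠ q.2 ∧ p.2 ≠ q.1 ∧ p.2 ≠ q.2

open Finset

section Independence

variable {Ω ι κ : Type*} [MeasurableSpace Ω] {μ : Measure Ω}

theorem lintegral_finset_prod_eq_prod_lintegral_of_iIndepFun {s : Finset ι}
    {f : ι → Ω → ℝ≥0∞} (hf : ∀ i ∈ s, Measurable (f i))
    (hindep : iIndepFun (fun i : s => f i) μ) :
    ∫⁻ ω, ∏ i ∈ s, f i ω ∂μ = ∏ i ∈ s, ∫⁻ ω, f i ω ∂μ := by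
  calc ∫⁻ ω, ∏ i ∈ s, f i ω ∂μ
      = ∫⁻ ω, ∏ i : s, f i ω ∂μ := lintegral_congr fun ω => (prod_coe_sort s _).symm
    _ = ∏ i : s, ∫⁻ ω, f i ω ∂μ :=
        lintegral_prod_eq_prod_lintegral_of_indepFun univ _ hindep fun i => hf i i.2
    _ = ∏ i ∈ s, ∫⁻ ω, f i ω ∂μ := prod_coe_sort s fun i => ∫⁻ ω, f i ω ∂μ

theorem lintegral_prod_le_prod_lintegral_pow_of_iIndepFun_fibers [DecidableEq κ]
    {s : Finset ι} {t : Finset κ} {g : ι → κ} (ht : t.Nonempty) (hg : ∀ i ∈ s, g i ∈ t)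
    {f : ι → Ω → ℝ≥0∞} (hf : ∀ i ∈ s, Measurable (f i))
    (hindep : ∀ c ∈ t, iIndepFun (fun i : {i ∈ s | g i = c} => f i) μ) :
    ∫⁻ ω, ∏ i ∈ s, f i ω ∂μ ≤ ∏ i ∈ s, (∫⁻ ω, f i ω ^ #t ∂μ) ^ (1 / (#t : ℝ)) := by
  set n := #t
  have hn : n ≠ 0 := ht.card_pos.ne'
  let F : κ → Ω → ℝ≥0∞ := fun c ω => ∏ i ∈ s with g i = c, f i ω ^ n
  have hF_meas (c : κ) : AEMeasurable (F c) μ :=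
    (measurable_prod _ fun i hi => (hf i (mem_filter.1 hi).1).pow_const n).aemeasurable
  have hF_lintegral (c : κ) (hc : c ∈ t) :
      ∫⁻ ω, F c ω ∂μ = ∏ i ∈ s with g i = c, ∫⁻ ω, f i ω ^ n ∂μ :=
    lintegral_finset_prod_eq_prod_lintegral_of_iIndepFun
      (fun i hi => (hf i (mem_filter.1 hi).1).pow_const n)
      ((hindep c hc).comp (fun _ x => x ^ n) fun _ => measurable_id.pow_const n)
  have hF_root (ω : Ω) : ∏ c ∈ t, F c ω ^ (1 / (n : ℝ)) = ∏ i ∈ s, f i ω := by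
    simp only [F]
    rw [← prod_fiberwise_of_maps_to hg]
    refine prod_congr rfl fun c _ => ?_
    rw [prod_pow, one_div, ENNReal.pow_rpow_inv_natCast hn]
  have hweights : ∑ _c ∈ t, 1 / (n : ℝ) = 1 := by
    rw [sum_const, nsmul_eq_mul, mul_one_div_cancel (Nat.cast_ne_zero.2 hn)]
  calc ∫⁻ ω, ∏ i ∈ s, f i ω ∂μ
      = ∫⁻ ω, ∏ c ∈ t, F c ω ^ (1 / (n : ℝ)) ∂μ := by simp_rw [hF_root]
    _ ≤ ∏ c ∈ t, (∫⁻ ω, F c ω ∂μ) ^ (1 / (n : ℝ)) :=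
        ENNReal.lintegral_prod_norm_pow_le t (fun c _ => hF_meas c) hweights
          fun _ _ => by positivity
    _ = ∏ c ∈ t, ∏ i ∈ s with g i = c, (∫⁻ ω, f i ω ^ n ∂μ) ^ (1 / (n : ℝ)) := by
        refine prod_congr rfl fun c hc => ?_
        rw [hF_lintegral c hc, ENNReal.prod_rpow_of_nonneg (by positivity)]
    _ = ∏ i ∈ s, (∫⁻ ω, f i ω ^ n ∂μ) ^ (1 / (n : ℝ)) := prod_fiberwise_of_maps_to hg _

end Independence

theorem Nat.eq_of_modEq_of_mem_Icc {N a b : ℕ} (ha : a ∈ Icc 1 N) (hb : b ∈ Icc 1 N)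
    (h : a ≡ b [MOD N]) : a = b := by
  rw [mem_Icc] at ha hb
  rcases le_total a b with hab | hab
  · have := Nat.eq_zero_of_dvd_of_lt ((Nat.modEq_iff_dvd' hab).1 h) (by omega)
    omega
  · have := Nat.eq_zero_of_dvd_of_lt ((Nat.modEq_iff_dvd' hab).1 h.symm) (by omega)
    omega

theorem noSharedCoord_filter_add_mod (N k : ℕ) :
    NoSharedCoord {p ∈ J N | (p.1 + p.2) % N = k} := by
  rintro ⟨a, b⟩ hp ⟨c, d⟩ hq hne
  simp only [J, mem_filter, mem_product] at hp hq
  obtain ⟨⟨⟨ha, hb⟩, hab⟩, hp⟩ := hp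
  obtain ⟨⟨⟨hc, hd⟩, hcd⟩, hq⟩ := hq
  have hsum : a + b ≡ c + d [MOD N] := hp.trans hq.symm
  have cancel {x y z : ℕ} (hy : y ∈ Icc 1 N) (hz : z ∈ Icc 1 N) (h : x + y ≡ x + z [MOD N]) :
      y = z :=
    Nat.eq_of_modEq_of_mem_Icc hy hz (Nat.ModEq.add_left_cancel' x h)
  simp only [ne_eq, Prod.mk.injEq] at hne ⊢
  refine ⟨?_, ?_, ?_, ?_⟩ <;> rintro rfl
  · exact hne ⟨rfl, cancel hb hd hsum⟩
  · have := cancel hb hc (by rwa [add_comm c a] at hsum)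
    omega
  · have := cancel ha hd (by rwa [add_comm a b] at hsum)
    omega
  · exact hne ⟨cancel ha hc (by rwa [add_comm a b, add_comm c b] at hsum), rfl⟩

theorem expectation_prod_le_of_partial_independence_general
    {Ω : Type*} [MeasurableSpace Ω] (μ : Measure Ω)
    (N : ℕ) (hN : 0 < N) (Γ : ℕ × ℕ → Ω → ℝ≥0∞)
    (hmeas : ∀ p ∈ J N, Measurable (Γ p))
    (hindep : ∀ S : Finset (ℕ × ℕ), S ⊆ J N → NoSharedCoord S →
      iIndepFun
        (fun p : S => Γ p) μ) :
    ∫⁻ ω, ∏ p ∈ J N, Γ p ω ∂μ ≤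
      ∏ p ∈ J N, (∫⁻ ω, Γ p ω ^ N ∂μ) ^ (1 / (N : ℝ)) := by
  have hdiagonals := lintegral_prod_le_prod_lintegral_pow_of_iIndepFun_fibers (μ := μ)
    (t := range N) (g := fun p : ℕ × ℕ => (p.1 + p.2) % N) (nonempty_range_iff.2 hN.ne')
    (fun p _ => mem_range.2 (Nat.mod_lt _ hN)) hmeas
    fun k _ => hindep _ (filter_subset _ _) (noSharedCoord_filter_add_mod N k)
  rwa [card_range] at hdiagonals

/-- If `{Γ p : p ∈ J N}` are nonnegative random variables such that any subfamily
indexed by pairs sharing no coordinate is mutually independent, then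
`E (∏_{m ≤ n} Γ_{m,n}) ≤ ∏_{m ≤ n} E (Γ_{m,n}^N)^{1/N}`. -/
theorem expectation_prod_le_of_partial_independence
    {Ω : Type*} [MeasurableSpace Ω] (μ : Measure Ω) [IsProbabilityMeasure μ]
    (N : ℕ) (hN : 0 < N) (Γ : ℕ × ℕ → Ω → ℝ≥0∞)
    (hmeas : ∀ p ∈ J N, Measurable (Γ p))
    (hindep : ∀ S : Finset (ℕ × ℕ), S ⊆ J N → NoSharedCoord S →
      iIndepFun
        (fun p : S => Γ p) μ) :
    ∫⁻ ω, ∏ p ∈ J N, Γ p ω ∂μ ≤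
      ∏ p ∈ J N, (∫⁻ ω, Γ p ω ^ N ∂μ) ^ (1 / (N : ℝ)) :=
  expectation_prod_le_of_partial_independence_general μ N hN Γ hmeas hindep
end

section
/- Let φ(x) = (sin x − x cos x)/x² for x > 0. Fix 0 ≤ u ≤ T, Λ > 0, and a real number c > 0. Then ∫₀^Λ ∫_u^T ∫_u^t e^{−r(t − s)} e^{−r²(t − u)/2} e^{−r²(s − u)/2} |φ(r c)| r² ds dt dr ≤ ∫₀^∞ |sin x − x cos x| x^{−3} dx, and in particular the left-hand side is bounded by a finite constant independent of u, T, Λ, and c. -/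
open MeasureTheory Real

/-- `φ x = (sin x - x cos x) / x²`. -/
noncomputable def phi (x : ℝ) : ℝ := (Real.sin x - x * Real.cos x) / x ^ 2

/-- The triple integral `∫₀^Λ ∫_u^T ∫_u^t e^{-r(t-s)} e^{-r²(t-u)/2} e^{-r²(s-u)/2}
|φ(rc)| r² ds dt dr`. -/
noncomputable def E_offdiag (u T Λ c : ℝ) : ℝ :=
  ∫ r in Set.Ioc (0 : ℝ) Λ, ∫ t in Set.Ioc u T, ∫ s in Set.Ioc u t,
    Real.exp (-(r * (t - s))) * Real.exp (-(r ^ 2 * (t - u) / 2)) *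
      Real.exp (-(r ^ 2 * (s - u) / 2)) * |phi (r * c)| * r ^ 2

/-! For fixed `r > 0`, on `s ≤ t` the Gaussian factors are at most `e^{-r²(s-u)}`; integrating
first in `t` (after Fubini) and then in `s` bounds the `(s, t)`-integral by `(1/r) (1/r²)`. So the
`r`-integrand is at most `|φ(rc)| / r = c ψ(cr)` with `ψ(x) = |φ(x)| / x`, and the substitution
`x = cr` bounds the `r`-integral by `∫₀^∞ ψ`, which is finite since `ψ ≤ 1` on `(0, ∞)`
and `ψ(x) ≤ 2 x⁻²` for `x ≥ 1`. -/

open Set Function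

section ExpIntegral

variable {k : ℝ} (a : ℝ) (hk : 0 < k)
include hk

lemma integrableOn_exp_neg_mul_sub_Ioi :
    IntegrableOn (fun x => exp (-(k * (x - a)))) (Ioi a) := by
  have h := (exp_neg_integrableOn_Ioi a hk).const_mul (exp (k * a))
  refine IntegrableOn.congr_fun h (fun x _ => ?_) measurableSet_Ioi
  rw [← exp_add]; ring_nf

lemma integral_exp_neg_mul_sub_Ioi : ∫ x in Ioi a, exp (-(k * (x - a))) = k⁻¹ := by
  have h : ∀ x, exp (-(k * (x - a))) = exp (k * a) * exp (-k * x) := fun x => by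
    rw [← exp_add]; ring_nf
  simp_rw [h]
  rw [integral_const_mul, integral_exp_mul_Ioi (neg_neg_of_pos hk), neg_div_neg_eq,
    ← mul_div_assoc, ← exp_add, neg_mul, add_neg_cancel, exp_zero, one_div]

lemma setIntegral_exp_neg_mul_sub_le {S : Set ℝ} (hS : S ⊆ Ici a) :
    ∫ x in S, exp (-(k * (x - a))) ≤ k⁻¹ := by
  rw [← integral_exp_neg_mul_sub_Ioi a hk]
  exact setIntegral_mono_set (integrableOn_exp_neg_mul_sub_Ioi a hk)
    (.of_forall fun _ => (exp_pos _).le) (hS.eventuallyLE.trans Ioi_ae_eq_Ici.symm.le)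

end ExpIntegral

lemma integral_Ioc_integral_Ioc_swap {F : ℝ → ℝ → ℝ} (hF : Continuous (uncurry F))
    (u T : ℝ) :
    ∫ t in Ioc u T, ∫ s in Ioc u t, F t s = ∫ s in Ioc u T, ∫ t in Icc s T, F t s := by
  set G : ℝ → ℝ → ℝ := fun t s => (Iic t).indicator (F t) s
  have hG : Integrable (uncurry G)
      ((volume.restrict (Ioc u T)).prod (volume.restrict (Ioc u T))) := by
    have huncurry : uncurry G = {p : ℝ × ℝ | p.2 ≤ p.1}.indicator (uncurry F) := by
      ext ⟨t, s⟩; simp [G, indicator_apply]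
    rw [huncurry, Measure.prod_restrict, ← Measure.volume_eq_prod]
    refine IntegrableOn.indicator ?_ (measurableSet_le measurable_snd measurable_fst)
    exact (hF.continuousOn.integrableOn_compact (isCompact_Icc.prod isCompact_Icc)).mono_set
      (prod_mono Ioc_subset_Icc_self Ioc_subset_Icc_self)
  calc ∫ t in Ioc u T, ∫ s in Ioc u t, F t s
      = ∫ t in Ioc u T, ∫ s in Ioc u T, G t s := by
        refine setIntegral_congr_fun measurableSet_Ioc fun t ht => ?_
        rw [setIntegral_indicator measurableSet_Iic, Ioc_inter_Iic, min_eq_right ht.2]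
    _ = ∫ s in Ioc u T, ∫ t in Ioc u T, G t s := integral_integral_swap hG
    _ = ∫ s in Ioc u T, ∫ t in Icc s T, F t s := by
        refine setIntegral_congr_fun measurableSet_Ioc fun s hs => ?_
        have hind : (fun t => G t s) = (Ici s).indicator (fun t => F t s) := by
          ext t; simp [G, indicator_apply]
        have hset : Ioc u T ∩ Ici s = Icc s T := by
          ext t
          simp only [mem_inter_iff, mem_Ioc, mem_Ici, mem_Icc]
          constructor
          · exact fun h => ⟨h.2, h.1.2⟩
          · exact fun h => ⟨⟨hs.1.trans_le h.1, h.2⟩, h.1⟩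
        rw [hind, setIntegral_indicator measurableSet_Ici, hset]

lemma exp_half_mul_exp_half_le_of_le {r u s t : ℝ} (hst : s ≤ t) :
    exp (-(r ^ 2 * (t - u) / 2)) * exp (-(r ^ 2 * (s - u) / 2)) ≤ exp (-(r ^ 2 * (s - u))) := by
  rw [← exp_add, exp_le_exp]
  nlinarith [sq_nonneg r]

lemma integral_Ioc_integral_Ioc_kernel_le (u T : ℝ) {r : ℝ} (hr : 0 < r) :
    ∫ t in Ioc u T, ∫ s in Ioc u t,
      exp (-(r * (t - s))) * exp (-(r ^ 2 * (t - u) / 2)) * exp (-(r ^ 2 * (s - u) / 2))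
      ≤ (r ^ 3)⁻¹ := by
  rw [integral_Ioc_integral_Ioc_swap (by fun_prop)]
  have hinner : ∀ s ∈ Ioc u T, ∫ t in Icc s T,
      exp (-(r * (t - s))) * exp (-(r ^ 2 * (t - u) / 2)) * exp (-(r ^ 2 * (s - u) / 2))
      ≤ exp (-(r ^ 2 * (s - u))) * r⁻¹ := fun s hs => calc
    _ ≤ ∫ t in Icc s T, exp (-(r * (t - s))) * exp (-(r ^ 2 * (s - u))) := by
        refine setIntegral_mono_on (Continuous.integrableOn_Icc (by fun_prop))
          (Continuous.integrableOn_Icc (by fun_prop)) measurableSet_Icc fun t ht => ?_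
        rw [mul_assoc]
        gcongr
        exact exp_half_mul_exp_half_le_of_le ht.1
    _ ≤ r⁻¹ * exp (-(r ^ 2 * (s - u))) := by
        rw [integral_mul_const]
        gcongr
        exact setIntegral_exp_neg_mul_sub_le s hr fun t ht => ht.1
    _ = exp (-(r ^ 2 * (s - u))) * r⁻¹ := mul_comm _ _
  calc _ ≤ ∫ s in Ioc u T, exp (-(r ^ 2 * (s - u))) * r⁻¹ := by
        refine integral_mono_of_nonneg (.of_forall fun s => integral_nonneg fun t => by positivity)
          (Continuous.integrableOn_Ioc (by fun_prop)) ?_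
        filter_upwards [ae_restrict_mem measurableSet_Ioc] with s hs using hinner s hs
    _ ≤ (r ^ 2)⁻¹ * r⁻¹ := by
        rw [integral_mul_const]
        gcongr
        exact setIntegral_exp_neg_mul_sub_le u (by positivity) fun s hs => hs.1.le
    _ = (r ^ 3)⁻¹ := by ring

lemma abs_sin_sub_mul_cos_le_pow_three {x : ℝ} (hx : 0 < x) :
    |sin x - x * cos x| ≤ x ^ 3 := by
  have hsin_lower := sin_gt_sub_cube hx
  have hcos_lower := mul_le_mul_of_nonneg_left (one_sub_sq_div_two_le_cos (x := x)) hx.le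
  have hcos_upper := mul_le_mul_of_nonneg_left (cos_le_one x) hx.le
  rw [abs_le]
  constructor <;> nlinarith [sin_le hx.le, pow_pos hx 3]

lemma abs_sin_sub_mul_cos_le (x : ℝ) : |sin x - x * cos x| ≤ 1 + |x| := calc
  _ ≤ |sin x| + |x| * |cos x| := (abs_sub _ _).trans_eq (by rw [abs_mul])
  _ ≤ 1 + |x| * 1 := by gcongr <;> [exact abs_sin_le_one x; exact abs_cos_le_one x]
  _ = 1 + |x| := by rw [mul_one]

/-- `psi x = |φ x| / x` for `x > 0`. -/
noncomputable def psi (x : ℝ) : ℝ := |sin x - x * cos x| * x ^ (-(3 : ℝ))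

lemma rpow_neg_three {x : ℝ} (hx : 0 ≤ x) : x ^ (-(3 : ℝ)) = (x ^ 3)⁻¹ := by
  rw [rpow_neg hx, ← rpow_natCast x 3, Nat.cast_ofNat]

lemma psi_nonneg {x : ℝ} (hx : 0 ≤ x) : 0 ≤ psi x :=
  mul_nonneg (abs_nonneg _) (rpow_nonneg hx _)

lemma psi_le_one {x : ℝ} (hx : 0 < x) : psi x ≤ 1 := by
  rw [psi, rpow_neg_three hx.le, ← div_eq_mul_inv]
  exact div_le_one_of_le₀ (abs_sin_sub_mul_cos_le_pow_three hx) (by positivity)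

lemma psi_le_two_mul_rpow {x : ℝ} (hx : 1 ≤ x) : psi x ≤ 2 * x ^ (-(2 : ℝ)) := by
  have hx0 : 0 < x := one_pos.trans_le hx
  have hrpow : x ^ (-(2 : ℝ)) = x * x ^ (-(3 : ℝ)) := by
    rw [show -(2 : ℝ) = 1 + -3 by norm_num, rpow_add hx0, rpow_one]
  calc psi x ≤ (1 + |x|) * x ^ (-(3 : ℝ)) :=
        mul_le_mul_of_nonneg_right (abs_sin_sub_mul_cos_le x) (rpow_nonneg hx0.le _)
    _ ≤ (2 * x) * x ^ (-(3 : ℝ)) := by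
        gcongr
        rw [abs_of_pos hx0]
        linarith
    _ = 2 * x ^ (-(2 : ℝ)) := by rw [hrpow, mul_assoc]

lemma measurable_psi : Measurable psi := by
  unfold psi
  fun_prop

lemma integrableOn_psi_Ioi : IntegrableOn psi (Ioi 0) := by
  rw [← Ioc_union_Ioi_eq_Ioi zero_le_one]
  refine IntegrableOn.union ?_ ?_
  · refine Integrable.mono' (integrable_const 1) measurable_psi.aestronglyMeasurable ?_
    filter_upwards [ae_restrict_mem measurableSet_Ioc] with x hx
    rw [norm_of_nonneg (psi_nonneg hx.1.le)]
    exact psi_le_one hx.1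
  · have hdom := (integrableOn_Ioi_rpow_of_lt (by norm_num : (-2 : ℝ) < -1) one_pos).const_mul 2
    refine Integrable.mono' hdom measurable_psi.aestronglyMeasurable ?_
    filter_upwards [ae_restrict_mem measurableSet_Ioi] with x hx
    rw [norm_of_nonneg (psi_nonneg (one_pos.trans hx).le)]
    exact psi_le_two_mul_rpow hx.le

lemma abs_phi_mul_sq_div_pow_three {r c : ℝ} (hr : 0 < r) (hc : 0 < c) :
    (r ^ 3)⁻¹ * |phi (r * c)| * r ^ 2 = c * psi (c * r) := by
  rw [phi, psi, rpow_neg_three (by positivity), mul_comm r c, abs_div,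
    abs_of_nonneg (sq_nonneg (c * r))]
  field_simp

lemma integral_Ioc_integral_Ioc_offdiag_le (u T : ℝ) {r c : ℝ} (hr : 0 < r) (hc : 0 < c) :
    ∫ t in Ioc u T, ∫ s in Ioc u t,
      exp (-(r * (t - s))) * exp (-(r ^ 2 * (t - u) / 2)) * exp (-(r ^ 2 * (s - u) / 2)) *
        |phi (r * c)| * r ^ 2
      ≤ c * psi (c * r) := by
  simp_rw [integral_mul_const]
  rw [← abs_phi_mul_sq_div_pow_three hr hc]
  gcongr
  exact integral_Ioc_integral_Ioc_kernel_le u T hr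

lemma E_offdiag_le_integral_psi (u T Λ : ℝ) {c : ℝ} (hc : 0 < c) :
    E_offdiag u T Λ c ≤ ∫ x in Ioi 0, psi x := by
  have hint : IntegrableOn (fun r => c * psi (c * r)) (Ioi 0) := by
    refine Integrable.const_mul ?_ c
    have h := integrableOn_Ioi_comp_mul_left_iff psi 0 hc
    rw [mul_zero] at h
    exact h.2 integrableOn_psi_Ioi
  calc E_offdiag u T Λ c ≤ ∫ r in Ioc 0 Λ, c * psi (c * r) := by
        refine integral_mono_of_nonneg
          (.of_forall fun r => integral_nonneg fun t => integral_nonneg fun s => by positivity)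
          (hint.mono_set Ioc_subset_Ioi_self) ?_
        filter_upwards [ae_restrict_mem measurableSet_Ioc] with r hr
        exact integral_Ioc_integral_Ioc_offdiag_le u T hr.1 hc
    _ ≤ ∫ r in Ioi 0, c * psi (c * r) := by
        refine setIntegral_mono_set hint ?_ Ioc_subset_Ioi_self.eventuallyLE
        filter_upwards [ae_restrict_mem measurableSet_Ioi] with r hr
        exact mul_nonneg hc.le (psi_nonneg (mul_pos hc hr).le)
    _ = ∫ x in Ioi 0, psi x := by
        rw [integral_const_mul, integral_comp_mul_left_Ioi psi 0 hc, mul_zero, smul_eq_mul,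
          mul_inv_cancel_left₀ hc.ne']

theorem E_offdiag_estimate_general (u T Λ c : ℝ) (hc : 0 < c) :
    E_offdiag u T Λ c ≤
        ∫ x in Set.Ioi (0 : ℝ), |Real.sin x - x * Real.cos x| * x ^ (-(3 : ℝ)) ∧
      ∃ C : ℝ, ∀ u' T' Λ' c' : ℝ, 0 ≤ u' → u' ≤ T' → 0 < Λ' → 0 < c' →
        E_offdiag u' T' Λ' c' ≤ C :=
  ⟨E_offdiag_le_integral_psi u T Λ hc,
    ⟨_, fun u' T' Λ' _ _ _ _ hc' => E_offdiag_le_integral_psi u' T' Λ' hc'⟩⟩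

theorem E_offdiag_estimate (u T Λ c : ℝ) (hu : 0 ≤ u) (huT : u ≤ T)
    (hΛ : 0 < Λ) (hc : 0 < c) :
    E_offdiag u T Λ c ≤
        ∫ x in Set.Ioi (0 : ℝ), |Real.sin x - x * Real.cos x| * x ^ (-(3 : ℝ)) ∧
      ∃ C : ℝ, ∀ u' T' Λ' c' : ℝ, 0 ≤ u' → u' ≤ T' → 0 < Λ' → 0 < c' →
        E_offdiag u' T' Λ' c' ≤ C :=
  E_offdiag_estimate_general u T Λ c hc
end
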